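/- Let n ≥ 1, let k : Fin n → ℂ, let A_k be the multiplication operator on EuclideanSpace ℂ (Fin n) defined by (A_k x) p = (k p) · (x p), let Ω = {p : Fin n | ‖1 - k p‖ < 1} be nonempty with t = max_{p ∈ Ω} ‖1 - k p‖, and let P be the coordinate projection onto Ω. Let i* ∈ EuclideanSpace ℂ (Fin n), J* = A_k(i*), and let (Xⁿ) be the reverse-filtering iteration X⁰ = J*, X^{n+1} = Xⁿ + J* - A_k(Xⁿ). Then the error of the Ω-component decays geometrically: for every n ≥ 0, ‖P(Xⁿ) - P(i*)‖ ≤ tⁿ·‖P(J*) - P(i*)‖. -/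

import Mathlib

/-- The multiplication (Fourier-multiplier) operator with multiplier `k`. -/
def mulOp (n : ℕ) (k : Fin n → ℂ) (x : EuclideanSpace ℂ (Fin n)) :
    EuclideanSpace ℂ (Fin n) :=
  WithLp.toLp 2 (fun p => k p * x p)

/-- The coordinate projection onto a subset `Ω` of `Fin n`. -/
def projSet (n : ℕ) (Ω : Finset (Fin n)) (x : EuclideanSpace ℂ (Fin n)) :
    EuclideanSpace ℂ (Fin n) :=
  WithLp.toLp 2 (fun p => if p ∈ Ω then x p else 0)

/-! Since `J* = A_k i*`, the error `Xᵐ - i*` obeys `X^{m+1} - i* = (I - A_k)(Xᵐ - i*)`, so its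
`p`-th coordinate is `(1 - k p)ᵐ (J* p - i* p)`. On `Ω` each factor `‖1 - k p‖ᵐ` is at most `tᵐ`,
and a coordinatewise bound on the moduli passes to the Euclidean norm. -/

open Finset

theorem EuclideanSpace.norm_le_mul_of_forall_norm_apply_le {𝕜 ι : Type*} [RCLike 𝕜] [Fintype ι]
    {x y : EuclideanSpace 𝕜 ι} {c : ℝ} (hc : 0 ≤ c) (h : ∀ i, ‖x i‖ ≤ c * ‖y i‖) :
    ‖x‖ ≤ c * ‖y‖ := by
  rw [EuclideanSpace.norm_eq, EuclideanSpace.norm_eq, ← Real.sqrt_sq hc,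
    ← Real.sqrt_mul (sq_nonneg c), mul_sum]
  refine Real.sqrt_le_sqrt (sum_le_sum fun i _ => ?_)
  rw [← mul_pow]
  exact pow_le_pow_left₀ (norm_nonneg _) (h i) 2

section

variable {n : ℕ}

@[simp]
theorem mulOp_apply (k : Fin n → ℂ) (x : EuclideanSpace ℂ (Fin n)) (p : Fin n) :
    mulOp n k x p = k p * x p := rfl

@[simp]
theorem projSet_apply (Ω : Finset (Fin n)) (x : EuclideanSpace ℂ (Fin n)) (p : Fin n) :
    projSet n Ω x p = if p ∈ Ω then x p else 0 := rfl

theorem projSet_sub (Ω : Finset (Fin n)) (x y : EuclideanSpace ℂ (Fin n)) :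
    projSet n Ω x - projSet n Ω y = projSet n Ω (x - y) := by
  ext p
  by_cases hp : p ∈ Ω <;> simp [hp]

theorem norm_projSet_le_mul {Ω : Finset (Fin n)} {x y : EuclideanSpace ℂ (Fin n)} {c : ℝ}
    (hc : 0 ≤ c) (h : ∀ p ∈ Ω, ‖x p‖ ≤ c * ‖y p‖) :
    ‖projSet n Ω x‖ ≤ c * ‖projSet n Ω y‖ := by
  refine EuclideanSpace.norm_le_mul_of_forall_norm_apply_le hc fun p => ?_
  by_cases hp : p ∈ Ω
  · simpa [hp] using h p hp
  · simp [hp]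

theorem reverseFiltering_sub_apply {k : Fin n → ℂ} {istar Jstar : EuclideanSpace ℂ (Fin n)}
    (hJ : Jstar = mulOp n k istar) {X : ℕ → EuclideanSpace ℂ (Fin n)}
    (hX : ∀ m : ℕ, X (m + 1) = X m + Jstar - mulOp n k (X m)) (m : ℕ) (p : Fin n) :
    X m p - istar p = (1 - k p) ^ m * (X 0 p - istar p) := by
  induction m with
  | zero => simp
  | succ m ih =>
    have hstep : X (m + 1) p - istar p = (1 - k p) * (X m p - istar p) := by
      rw [hX m, hJ]
      simp only [PiLp.sub_apply, PiLp.add_apply, mulOp_apply]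
      ring
    rw [hstep, ih, pow_succ']
    ring

end

theorem multiplier_operator_projected_error_geometric_decay_general
    (n : ℕ) (k : Fin n → ℂ)
    (Ω : Finset (Fin n))
    (hΩ : Ω.Nonempty)
    (istar Jstar : EuclideanSpace ℂ (Fin n)) (hJ : Jstar = mulOp n k istar)
    (X : ℕ → EuclideanSpace ℂ (Fin n)) (hX0 : X 0 = Jstar)
    (hX : ∀ m : ℕ, X (m + 1) = X m + Jstar - mulOp n k (X m)) :
    ∀ m : ℕ,
      ‖projSet n Ω (X m) - projSet n Ω istar‖ ≤
        (Ω.sup' hΩ (fun p => ‖(1 : ℂ) - k p‖)) ^ m *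
          ‖projSet n Ω Jstar - projSet n Ω istar‖ := by
  intro m
  have ht : 0 ≤ Ω.sup' hΩ (fun p => ‖(1 : ℂ) - k p‖) :=
    le_sup'_of_le _ hΩ.choose_spec (norm_nonneg _)
  rw [projSet_sub, projSet_sub]
  refine norm_projSet_le_mul (pow_nonneg ht m) fun p hp => ?_
  rw [PiLp.sub_apply, reverseFiltering_sub_apply hJ hX, hX0, norm_mul, norm_pow, PiLp.sub_apply]
  gcongr
  exact le_sup' (fun p => ‖(1 : ℂ) - k p‖) hp

/-- The `Ω`-component of the reverse-filtering iteration error decays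
geometrically: `‖P Xⁿ - P i*‖ ≤ tⁿ·‖P J* - P i*‖` with
`t = max_{p ∈ Ω} ‖1 - k p‖`. -/
theorem multiplier_operator_projected_error_geometric_decay
    (n : ℕ) (hn : 0 < n) (k : Fin n → ℂ)
    (Ω : Finset (Fin n)) (hΩdef : Ω = Finset.univ.filter (fun p => ‖(1 : ℂ) - k p‖ < 1))
    (hΩ : Ω.Nonempty)
    (istar Jstar : EuclideanSpace ℂ (Fin n)) (hJ : Jstar = mulOp n k istar)
    (X : ℕ → EuclideanSpace ℂ (Fin n)) (hX0 : X 0 = Jstar)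
    (hX : ∀ m : ℕ, X (m + 1) = X m + Jstar - mulOp n k (X m)) :
    ∀ m : ℕ,
      ‖projSet n Ω (X m) - projSet n Ω istar‖ ≤
        (Ω.sup' hΩ (fun p => ‖(1 : ℂ) - k p‖)) ^ m *
          ‖projSet n Ω Jstar - projSet n Ω istar‖ :=
  multiplier_operator_projected_error_geometric_decay_general n k Ω hΩ istar Jstar hJ X hX0 hX
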